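/- arXiv:2312.15177 — 5 statements merged into one kernel-verified Lean document; each statement's English description precedes it below -/
import Mathlib

section
/- Suppose Γ_Y1 ∈ ℝ^{p×pL} satisfies Γ_Y1 𝒪 = C A^L and set Γ_U1 := C 𝒞 − Γ_Y1 G ∈ ℝ^{p×mL}. Then for every t ≥ L, the noise-free output of the LTI system satisfies the data-driven recursion y°_t = Γ_U1 u_{[t-L,t)} + Γ_Y1 y°_{[t-L,t)} + (F − Γ_Y1 E) ρ_{[t-L,t)}. -/
open Matrix
open scoped Kronecker

noncomputable section

/-- Stacked window `z_{[t-L,t)} = col(z_{t-L}, …, z_{t-1})`; block `i` is `z_{t-L+i}`. -/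
def stackWin (L : ℕ) {d : Type*} (z : ℕ → d → ℝ) (t : ℕ) : Fin L × d → ℝ :=
  fun q => z (t - L + (q.1 : ℕ)) q.2

/-- Reversed controllability-type matrix `𝒞 = [A^{L-1}B, …, AB, B]`. -/
def ctrbMat (n m L : ℕ) (A : Matrix (Fin n) (Fin n) ℝ) (B : Matrix (Fin n) (Fin m) ℝ) :
    Matrix (Fin n) (Fin L × Fin m) ℝ :=
  Matrix.of fun r q => (A ^ (L - 1 - (q.1 : ℕ)) * B) r q.2

/-- `𝒞_W = [A^{L-1}, …, A, I_n]`. -/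
def ctrbWMat (n L : ℕ) (A : Matrix (Fin n) (Fin n) ℝ) :
    Matrix (Fin n) (Fin L × Fin n) ℝ :=
  Matrix.of fun r q => (A ^ (L - 1 - (q.1 : ℕ))) r q.2

/-- Extended observability matrix `𝒪 = col(C, CA, …, CA^{L-1})`. -/
def obsvMat (n p L : ℕ) (A : Matrix (Fin n) (Fin n) ℝ) (C : Matrix (Fin p) (Fin n) ℝ) :
    Matrix (Fin L × Fin p) (Fin n) ℝ :=
  Matrix.of fun q c => (C * A ^ (q.1 : ℕ)) q.2 c

/-- Strictly lower block-triangular Toeplitz matrix `G`: block `(i,j)` is `C A^{i-j-1} B` for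
`j < i` and `0` otherwise. -/
def toepG (n m p L : ℕ) (A : Matrix (Fin n) (Fin n) ℝ) (B : Matrix (Fin n) (Fin m) ℝ)
    (C : Matrix (Fin p) (Fin n) ℝ) : Matrix (Fin L × Fin p) (Fin L × Fin m) ℝ :=
  Matrix.of fun q r =>
    if (r.1 : ℕ) < (q.1 : ℕ) then (C * A ^ ((q.1 : ℕ) - (r.1 : ℕ) - 1) * B) q.2 r.2 else 0

/-- `G_W`: block `(i,j)` is `C A^{i-j-1}` for `j < i` and `0` otherwise. -/
def toepGW (n p L : ℕ) (A : Matrix (Fin n) (Fin n) ℝ) (C : Matrix (Fin p) (Fin n) ℝ) :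
    Matrix (Fin L × Fin p) (Fin L × Fin n) ℝ :=
  Matrix.of fun q r =>
    if (r.1 : ℕ) < (q.1 : ℕ) then (C * A ^ ((q.1 : ℕ) - (r.1 : ℕ) - 1)) q.2 r.2 else 0

/-- `E`: block `(i,j)` is the selection matrix `S_{i-j}` (picking block `i-j-1` in 0-based
indexing) for `j < i` and `0` otherwise. -/
def selE (p L : ℕ) : Matrix (Fin L × Fin p) (Fin L × (Fin L × Fin p)) ℝ :=
  Matrix.of fun q r =>
    if (r.1 : ℕ) < (q.1 : ℕ) ∧ (r.2.1 : ℕ) = (q.1 : ℕ) - (r.1 : ℕ) - 1 ∧ q.2 = r.2.2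
    then 1 else 0

/-- `F = [S_L, S_{L-1}, …, S_1]`: block `j` (0-based) picks block `L-1-j` (0-based). -/
def selF (p L : ℕ) : Matrix (Fin p) (Fin L × (Fin L × Fin p)) ℝ :=
  Matrix.of fun a r => if (r.2.1 : ℕ) = L - 1 - (r.1 : ℕ) ∧ a = r.2.2 then 1 else 0

/-- `ρ_t := 𝒪 w_t`. -/
def rhoSig (n p L : ℕ) (A : Matrix (Fin n) (Fin n) ℝ) (C : Matrix (Fin p) (Fin n) ℝ)
    (w : ℕ → Fin n → ℝ) (t : ℕ) : Fin L × Fin p → ℝ :=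
  (obsvMat n p L A C).mulVec (w t)

/-- Index type for the auxiliary state: `u`-block (size `mL`), `y°`-block (size `pL`),
`ρ`-block (size `pL²`). -/
abbrev AuxIdx (m p L : ℕ) := (Fin L × Fin m) ⊕ ((Fin L × Fin p) ⊕ (Fin L × (Fin L × Fin p)))

/-- The auxiliary system matrix `𝐀` (with `W = F − Γ_Y1 E` in the paper). -/
def auxA (m p L : ℕ) (ΓU : Matrix (Fin p) (Fin L × Fin m) ℝ)
    (ΓY : Matrix (Fin p) (Fin L × Fin p) ℝ)
    (W : Matrix (Fin p) (Fin L × (Fin L × Fin p)) ℝ) :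
    Matrix (AuxIdx m p L) (AuxIdx m p L) ℝ :=
  Matrix.of fun r c =>
    match r, c with
    | Sum.inl q, Sum.inl q' => if (q'.1 : ℕ) = (q.1 : ℕ) + 1 ∧ q.2 = q'.2 then 1 else 0
    | Sum.inl _, Sum.inr _ => 0
    | Sum.inr (Sum.inl q), Sum.inl q' =>
        if (q.1 : ℕ) = L - 1 then ΓU q.2 q' else 0
    | Sum.inr (Sum.inl q), Sum.inr (Sum.inl q') =>
        if (q.1 : ℕ) = L - 1 then ΓY q.2 q'
        else if (q'.1 : ℕ) = (q.1 : ℕ) + 1 ∧ q.2 = q'.2 then 1 else 0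
    | Sum.inr (Sum.inl q), Sum.inr (Sum.inr r') =>
        if (q.1 : ℕ) = L - 1 then W q.2 r' else 0
    | Sum.inr (Sum.inr _), Sum.inl _ => 0
    | Sum.inr (Sum.inr _), Sum.inr (Sum.inl _) => 0
    | Sum.inr (Sum.inr q), Sum.inr (Sum.inr q') =>
        if (q'.1 : ℕ) = (q.1 : ℕ) + 1 ∧ q.2 = q'.2 then 1 else 0

/-- The auxiliary input matrix `𝐁 = col(0_{m(L-1)×m}, I_m, 0, 0)`. -/
def auxB (m p L : ℕ) : Matrix (AuxIdx m p L) (Fin m) ℝ :=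
  Matrix.of fun r c =>
    match r with
    | Sum.inl q => if (q.1 : ℕ) = L - 1 ∧ q.2 = c then 1 else 0
    | Sum.inr _ => 0

/-- The auxiliary output matrix `𝐂 = [Γ_U1 | Γ_Y1 | F − Γ_Y1 E]` (with `W = F − Γ_Y1 E`). -/
def auxC (m p L : ℕ) (ΓU : Matrix (Fin p) (Fin L × Fin m) ℝ)
    (ΓY : Matrix (Fin p) (Fin L × Fin p) ℝ)
    (W : Matrix (Fin p) (Fin L × (Fin L × Fin p)) ℝ) :
    Matrix (Fin p) (AuxIdx m p L) ℝ :=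
  Matrix.of fun a c =>
    match c with
    | Sum.inl q => ΓU a q
    | Sum.inr (Sum.inl q) => ΓY a q
    | Sum.inr (Sum.inr q) => W a q

/-- The auxiliary state `𝐱_t = col(u_{[t-L,t)}, y°_{[t-L,t)}, ρ_{[t-L,t)})`. -/
def auxState (n m p L : ℕ) (A : Matrix (Fin n) (Fin n) ℝ) (C : Matrix (Fin p) (Fin n) ℝ)
    (u : ℕ → Fin m → ℝ) (y : ℕ → Fin p → ℝ) (w : ℕ → Fin n → ℝ) (t : ℕ) :
    AuxIdx m p L → ℝ :=
  Sum.elim (stackWin L u t) (Sum.elim (stackWin L y t) (stackWin L (rhoSig n p L A C w) t))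

/-- The auxiliary disturbance `𝐰_t = col(0, 0, 0_{pL(L-1)}, ρ_t)`. -/
def auxW (n m p L : ℕ) (A : Matrix (Fin n) (Fin n) ℝ) (C : Matrix (Fin p) (Fin n) ℝ)
    (w : ℕ → Fin n → ℝ) (t : ℕ) : AuxIdx m p L → ℝ :=
  Sum.elim 0 (Sum.elim 0 fun q =>
    if (q.1 : ℕ) = L - 1 then rhoSig n p L A C w t q.2 else 0)

/-- A real square matrix is Schur stable if all its complex eigenvalues have modulus `< 1`. -/
def SchurStable {ι : Type*} [Fintype ι] [DecidableEq ι] (M : Matrix ι ι ℝ) : Prop :=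
  ∀ z ∈ spectrum ℂ (M.map (algebraMap ℝ ℂ)), ‖z‖ < 1



section OutputRecursionHelpers

private lemma mulVec_sum' {ι κ α : Type*} [Fintype κ] (M : Matrix ι κ ℝ) (s : Finset α)
    (f : α → κ → ℝ) : M.mulVec (∑ i ∈ s, f i) = ∑ i ∈ s, M.mulVec (f i) := by
  funext a
  simp only [Matrix.mulVec, dotProduct, Finset.sum_apply, Finset.mul_sum]
  exact Finset.sum_comm

private lemma sum_ite_val {L : ℕ} (e : ℕ) (he : e < L) (f : Fin L → ℝ) :
    ∑ k : Fin L, (if (k : ℕ) = e then f k else 0) = f ⟨e, he⟩ := by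
  rw [Finset.sum_eq_single (⟨e, he⟩ : Fin L)]
  · simp
  · intro k _ hk
    rw [if_neg]
    exact fun h => hk (Fin.ext h)
  · simp

private lemma sum_fin_lt {L : ℕ} (i : ℕ) (hi : i ≤ L) (f : ℕ → ℝ) :
    ∑ j : Fin L, (if (j : ℕ) < i then f (j : ℕ) else 0) = ∑ j ∈ Finset.range i, f j := by
  rw [Fin.sum_univ_eq_sum_range (fun j => if j < i then f j else 0) L, ← Finset.sum_filter]
  congr 1
  ext j
  simp only [Finset.mem_filter, Finset.mem_range]
  omega

private lemma stackWin_apply {L : ℕ} {d : Type*} (z : ℕ → d → ℝ) (s : ℕ) (q : Fin L × d) :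
    stackWin L z (s + L) q = z (s + (q.1 : ℕ)) q.2 := by
  simp [stackWin]

private lemma state_sol {n m : ℕ} (A : Matrix (Fin n) (Fin n) ℝ) (B : Matrix (Fin n) (Fin m) ℝ)
    (x : ℕ → Fin n → ℝ) (u : ℕ → Fin m → ℝ) (w : ℕ → Fin n → ℝ)
    (hdyn : ∀ t, x (t + 1) = A.mulVec (x t) + B.mulVec (u t) + w t) (s : ℕ) :
    ∀ k, x (s + k) = (A ^ k).mulVec (x s)
      + ∑ j ∈ Finset.range k, (A ^ (k - 1 - j)).mulVec (B.mulVec (u (s + j)) + w (s + j)) := by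
  intro k
  induction k with
  | zero => simp
  | succ k ih =>
    have h1 : x (s + (k + 1)) = A.mulVec (x (s + k)) + B.mulVec (u (s + k)) + w (s + k) := by
      rw [← Nat.add_assoc]; exact hdyn (s + k)
    rw [h1, ih, Matrix.mulVec_add, Matrix.mulVec_mulVec, mulVec_sum', Finset.sum_range_succ]
    have hterm : ∀ j ∈ Finset.range k,
        A.mulVec ((A ^ (k - 1 - j)).mulVec (B.mulVec (u (s + j)) + w (s + j)))
          = (A ^ (k + 1 - 1 - j)).mulVec (B.mulVec (u (s + j)) + w (s + j)) := by
      intro j hj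
      rw [Finset.mem_range] at hj
      rw [Matrix.mulVec_mulVec]
      have h2 : k + 1 - 1 - j = (k - 1 - j) + 1 := by omega
      rw [h2, pow_succ']
    rw [Finset.sum_congr rfl hterm, (pow_succ' A k).symm]
    have h0 : k + 1 - 1 - k = 0 := by omega
    rw [h0, pow_zero, Matrix.one_mulVec]
    abel

private lemma ctrb_expand {n m p L : ℕ} (A : Matrix (Fin n) (Fin n) ℝ)
    (B : Matrix (Fin n) (Fin m) ℝ) (C : Matrix (Fin p) (Fin n) ℝ)
    (u : ℕ → Fin m → ℝ) (s : ℕ) :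
    (C * ctrbMat n m L A B).mulVec (stackWin L u (s + L))
      = ∑ j : Fin L, (C * A ^ (L - 1 - (j : ℕ)) * B).mulVec (u (s + (j : ℕ))) := by
  funext a
  simp only [Matrix.mulVec, dotProduct, Finset.sum_apply, Fintype.sum_prod_type]
  refine Finset.sum_congr rfl fun j _ => Finset.sum_congr rfl fun b _ => ?_
  rw [stackWin_apply]
  congr 1
  rw [Matrix.mul_assoc, Matrix.mul_apply, Matrix.mul_apply]
  exact Finset.sum_congr rfl fun c _ => rfl

private lemma selF_expand {n p L : ℕ} (A : Matrix (Fin n) (Fin n) ℝ)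
    (C : Matrix (Fin p) (Fin n) ℝ) (w : ℕ → Fin n → ℝ) (s : ℕ) :
    (selF p L).mulVec (stackWin L (rhoSig n p L A C w) (s + L))
      = ∑ j : Fin L, (C * A ^ (L - 1 - (j : ℕ))).mulVec (w (s + (j : ℕ))) := by
  funext a
  simp only [Matrix.mulVec, dotProduct, Finset.sum_apply, Fintype.sum_prod_type]
  refine Finset.sum_congr rfl fun j _ => ?_
  have he : L - 1 - (j : ℕ) < L := by have := j.isLt; omega
  calc ∑ k : Fin L, ∑ b : Fin p,
        selF p L a (j, (k, b)) * stackWin L (rhoSig n p L A C w) (s + L) (j, (k, b))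
      = ∑ k : Fin L, (if (k : ℕ) = L - 1 - (j : ℕ) then
            rhoSig n p L A C w (s + (j : ℕ)) (k, a) else 0) := by
        refine Finset.sum_congr rfl fun k _ => ?_
        by_cases hk : (k : ℕ) = L - 1 - (j : ℕ) <;>
          simp [selF, hk, stackWin, Nat.add_sub_cancel]
    _ = rhoSig n p L A C w (s + (j : ℕ)) (⟨L - 1 - (j : ℕ), he⟩, a) := sum_ite_val _ he _
    _ = ∑ c : Fin n, (C * A ^ (L - 1 - (j : ℕ))) a c * w (s + (j : ℕ)) c := by
        simp [rhoSig, Matrix.mulVec, dotProduct, obsvMat]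

private lemma selE_expand {n p L : ℕ} (A : Matrix (Fin n) (Fin n) ℝ)
    (C : Matrix (Fin p) (Fin n) ℝ) (w : ℕ → Fin n → ℝ) (s : ℕ) :
    (selE p L).mulVec (stackWin L (rhoSig n p L A C w) (s + L))
      = (toepGW n p L A C).mulVec (stackWin L w (s + L)) := by
  funext q
  obtain ⟨i, c⟩ := q
  simp only [Matrix.mulVec, dotProduct, Fintype.sum_prod_type]
  refine Finset.sum_congr rfl fun j _ => ?_
  by_cases hj : (j : ℕ) < (i : ℕ)
  · have he : (i : ℕ) - (j : ℕ) - 1 < L := by have := i.isLt; omega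
    calc ∑ k : Fin L, ∑ b : Fin p,
          selE p L (i, c) (j, (k, b)) * stackWin L (rhoSig n p L A C w) (s + L) (j, (k, b))
        = ∑ k : Fin L, (if (k : ℕ) = (i : ℕ) - (j : ℕ) - 1 then
              rhoSig n p L A C w (s + (j : ℕ)) (k, c) else 0) := by
          refine Finset.sum_congr rfl fun k _ => ?_
          by_cases hk : (k : ℕ) = (i : ℕ) - (j : ℕ) - 1 <;>
            simp [selE, hk, stackWin, Nat.add_sub_cancel, show j < i from hj]
      _ = rhoSig n p L A C w (s + (j : ℕ)) (⟨(i : ℕ) - (j : ℕ) - 1, he⟩, c) :=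
          sum_ite_val _ he _
      _ = ∑ b : Fin n, toepGW n p L A C (i, c) (j, b) * stackWin L w (s + L) (j, b) := by
          simp [rhoSig, Matrix.mulVec, dotProduct, obsvMat, toepGW, stackWin,
            Nat.add_sub_cancel, show j < i from hj]
  · simp [selE, toepGW, show ¬ j < i from hj]

private lemma ywin_decomp {n m p L : ℕ} (A : Matrix (Fin n) (Fin n) ℝ)
    (B : Matrix (Fin n) (Fin m) ℝ) (C : Matrix (Fin p) (Fin n) ℝ)
    (x : ℕ → Fin n → ℝ) (u : ℕ → Fin m → ℝ) (w : ℕ → Fin n → ℝ) (y : ℕ → Fin p → ℝ)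
    (hdyn : ∀ t, x (t + 1) = A.mulVec (x t) + B.mulVec (u t) + w t)
    (hout : ∀ t, y t = C.mulVec (x t)) (s : ℕ) :
    stackWin L y (s + L) = (obsvMat n p L A C).mulVec (x s)
      + (toepG n m p L A B C).mulVec (stackWin L u (s + L))
      + (toepGW n p L A C).mulVec (stackWin L w (s + L)) := by
  funext q
  obtain ⟨i, c⟩ := q
  have hy : y (s + (i : ℕ)) = (C * A ^ (i : ℕ)).mulVec (x s)
      + ∑ j ∈ Finset.range (i : ℕ),
          ((C * A ^ ((i : ℕ) - j - 1) * B).mulVec (u (s + j))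
            + (C * A ^ ((i : ℕ) - j - 1)).mulVec (w (s + j))) := by
    rw [hout, state_sol A B x u w hdyn s (i : ℕ), Matrix.mulVec_add, Matrix.mulVec_mulVec,
      mulVec_sum']
    congr 1
    refine Finset.sum_congr rfl fun j hj => ?_
    rw [Finset.mem_range] at hj
    rw [Matrix.mulVec_mulVec]
    have h2 : (i : ℕ) - 1 - j = (i : ℕ) - j - 1 := by omega
    rw [h2, Matrix.mulVec_add, Matrix.mulVec_mulVec]
  have h1 : (obsvMat n p L A C).mulVec (x s) (i, c) = ((C * A ^ (i : ℕ)).mulVec (x s)) c := by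
    simp [Matrix.mulVec, dotProduct, obsvMat]
  have h2 : (toepG n m p L A B C).mulVec (stackWin L u (s + L)) (i, c)
      = ∑ j ∈ Finset.range (i : ℕ), ((C * A ^ ((i : ℕ) - j - 1) * B).mulVec (u (s + j))) c := by
    rw [← sum_fin_lt (i : ℕ) (le_of_lt i.isLt)
      (fun j => ((C * A ^ ((i : ℕ) - j - 1) * B).mulVec (u (s + j))) c)]
    simp only [Matrix.mulVec, dotProduct, Fintype.sum_prod_type]
    refine Finset.sum_congr rfl fun j _ => ?_
    by_cases hj : (j : ℕ) < (i : ℕ)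
    · simp [toepG, stackWin, Nat.add_sub_cancel, Matrix.mulVec, dotProduct,
        show j < i from hj]
    · simp [toepG, stackWin, Nat.add_sub_cancel, show ¬ j < i from hj]
  have h3 : (toepGW n p L A C).mulVec (stackWin L w (s + L)) (i, c)
      = ∑ j ∈ Finset.range (i : ℕ), ((C * A ^ ((i : ℕ) - j - 1)).mulVec (w (s + j))) c := by
    rw [← sum_fin_lt (i : ℕ) (le_of_lt i.isLt)
      (fun j => ((C * A ^ ((i : ℕ) - j - 1)).mulVec (w (s + j))) c)]
    simp only [Matrix.mulVec, dotProduct, Fintype.sum_prod_type]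
    refine Finset.sum_congr rfl fun j _ => ?_
    by_cases hj : (j : ℕ) < (i : ℕ)
    · simp [toepGW, stackWin, Nat.add_sub_cancel, Matrix.mulVec, dotProduct,
        show j < i from hj]
    · simp [toepGW, stackWin, Nat.add_sub_cancel, show ¬ j < i from hj]
  show stackWin L y (s + L) (i, c) = _
  rw [Pi.add_apply, Pi.add_apply, h1, h2, h3, stackWin_apply, hy]
  simp [Finset.sum_apply, Finset.sum_add_distrib, add_assoc]

end OutputRecursionHelpers

/-- data-driven output recursion
`y°_t = Γ_U1 u_{[t-L,t)} + Γ_Y1 y°_{[t-L,t)} + (F − Γ_Y1 E) ρ_{[t-L,t)}` for `t ≥ L`. -/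
theorem output_data_recursion (n m p L : ℕ) (hL : 1 ≤ L)
    (A : Matrix (Fin n) (Fin n) ℝ) (B : Matrix (Fin n) (Fin m) ℝ)
    (C : Matrix (Fin p) (Fin n) ℝ)
    (x : ℕ → Fin n → ℝ) (u : ℕ → Fin m → ℝ) (w : ℕ → Fin n → ℝ) (y : ℕ → Fin p → ℝ)
    (hdyn : ∀ t, x (t + 1) = A.mulVec (x t) + B.mulVec (u t) + w t)
    (hout : ∀ t, y t = C.mulVec (x t))
    (ΓY : Matrix (Fin p) (Fin L × Fin p) ℝ)
    (hΓY : ΓY * obsvMat n p L A C = C * A ^ L)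
    (ΓU : Matrix (Fin p) (Fin L × Fin m) ℝ)
    (hΓU : ΓU = C * ctrbMat n m L A B - ΓY * toepG n m p L A B C) :
    ∀ t, L ≤ t →
      y t = ΓU.mulVec (stackWin L u t) + ΓY.mulVec (stackWin L y t)
          + (selF p L - ΓY * selE p L).mulVec (stackWin L (rhoSig n p L A C w) t) := by
  intro t ht
  obtain ⟨s, rfl⟩ : ∃ s, t = s + L := ⟨t - L, by omega⟩
  have hy := ywin_decomp (L := L) A B C x u w y hdyn hout s
  have e1 : (ΓY * toepG n m p L A B C).mulVec (stackWin L u (s + L))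
      = ΓY.mulVec ((toepG n m p L A B C).mulVec (stackWin L u (s + L))) :=
    (Matrix.mulVec_mulVec _ _ _).symm
  have e2 : (ΓY * selE p L).mulVec (stackWin L (rhoSig n p L A C w) (s + L))
      = ΓY.mulVec ((toepGW n p L A C).mulVec (stackWin L w (s + L))) := by
    rw [← Matrix.mulVec_mulVec, selE_expand]
  have e3 : ΓY.mulVec ((obsvMat n p L A C).mulVec (x s)) = (C * A ^ L).mulVec (x s) := by
    rw [Matrix.mulVec_mulVec, hΓY]
  have e6 : y (s + L) = (C * A ^ L).mulVec (x s)
      + ∑ j ∈ Finset.range L, ((C * A ^ (L - 1 - j) * B).mulVec (u (s + j))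
          + (C * A ^ (L - 1 - j)).mulVec (w (s + j))) := by
    rw [hout, state_sol A B x u w hdyn s L, Matrix.mulVec_add, Matrix.mulVec_mulVec,
      mulVec_sum']
    congr 1
    refine Finset.sum_congr rfl fun j hj => ?_
    rw [Matrix.mulVec_mulVec, Matrix.mulVec_add, Matrix.mulVec_mulVec]
  rw [hΓU, hy, Matrix.sub_mulVec, Matrix.sub_mulVec, Matrix.mulVec_add, Matrix.mulVec_add,
    e1, e2, e3, ctrb_expand, selF_expand, e6, Finset.sum_add_distrib,
    Fin.sum_univ_eq_sum_range (fun j => (C * A ^ (L - 1 - j) * B).mulVec (u (s + j))) L,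
    Fin.sum_univ_eq_sum_range (fun j => (C * A ^ (L - 1 - j)).mulVec (w (s + j))) L]
  abel


end
end

section
/- (Auxiliary model, state equation.) Suppose Γ_Y1 ∈ ℝ^{p×pL} satisfies Γ_Y1 𝒪 = C A^L and set Γ_U1 := C 𝒞 − Γ_Y1 G. Define the auxiliary state 𝐱_t := col(u_{[t-L,t)}, y°_{[t-L,t)}, ρ_{[t-L,t)}) ∈ ℝ^{n_aux} and auxiliary disturbance 𝐰_t := col(0_{mL}, 0_{pL}, 0_{pL(L-1)}, ρ_t) ∈ ℝ^{n_aux}, where n_aux := mL + pL + pL². Then for every t ≥ L, 𝐱_{t+1} = 𝐀 𝐱_t + 𝐁 u_t + 𝐰_t, where 𝐁 := col(0_{m(L-1)×m}, I_m, 0_{pL×m}, 0_{pL²×m}) and 𝐀 ∈ ℝ^{n_aux×n_aux} is the block matrix whose first block row-group (on the u-block of size mL) is the upward block shift [[0, I_{m(L-1)}],[0,0]] with zeros elsewhere; whose second block row-group (on the y°-block of size pL) has top p(L-1) rows [0_{p(L-1)×mL} | [0_{p(L-1)×p}, I_{p(L-1)}] | 0] and bottom p rows [Γ_U1 | Γ_Y1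 | F − Γ_Y1 E]; and whose third block row-group (on the ρ-block of size pL²) is the upward block shift [[0, I_{pL(L-1)}],[0,0]] with zeros elsewhere. -/
open Matrix
open scoped Kronecker

noncomputable section

section MyAux

variable {n m p L : ℕ}

private lemma my_rollout (A : Matrix (Fin n) (Fin n) ℝ) (B : Matrix (Fin n) (Fin m) ℝ)
    (x : ℕ → Fin n → ℝ) (u : ℕ → Fin m → ℝ) (w : ℕ → Fin n → ℝ)
    (hdyn : ∀ t, x (t + 1) = A.mulVec (x t) + B.mulVec (u t) + w t) (s : ℕ) :
    ∀ k, x (s + k) = (A ^ k).mulVec (x s)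
      + ∑ j ∈ Finset.range k, ((A ^ (k - 1 - j) * B).mulVec (u (s + j))
          + (A ^ (k - 1 - j)).mulVec (w (s + j))) := by
  intro k
  induction k with
  | zero => simp [Matrix.one_mulVec]
  | succ k ih =>
      have hsk : s + (k + 1) = (s + k) + 1 := by ring
      rw [hsk, hdyn, ih, Finset.sum_range_succ]
      simp only [Matrix.mulVec_add, ← Matrix.mulVecLin_apply, map_sum, map_add]
      simp only [Matrix.mulVecLin_apply, Matrix.mulVec_mulVec]
      have h2 : ∀ j ∈ Finset.range k,
          (A * (A ^ (k - 1 - j) * B)).mulVec (u (s + j)) + (A * A ^ (k - 1 - j)).mulVec (w (s + j))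
          = (A ^ (k + 1 - 1 - j) * B).mulVec (u (s + j))
            + (A ^ (k + 1 - 1 - j)).mulVec (w (s + j)) := by
        intro j hj
        have hp : A * A ^ (k - 1 - j) = A ^ (k + 1 - 1 - j) := by
          rw [← pow_succ']
          congr 1
          have := Finset.mem_range.mp hj
          omega
        rw [← Matrix.mul_assoc, hp]
      rw [Finset.sum_congr rfl h2, ← pow_succ']
      have h3 : (A ^ (k + 1 - 1 - k) * B).mulVec (u (s + k)) + (A ^ (k + 1 - 1 - k)).mulVec (w (s + k))
          = B.mulVec (u (s + k)) + w (s + k) := by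
        simp [Nat.sub_self, Matrix.one_mulVec]
      rw [h3]
      abel

private lemma my_y_eq (A : Matrix (Fin n) (Fin n) ℝ) (B : Matrix (Fin n) (Fin m) ℝ)
    (C : Matrix (Fin p) (Fin n) ℝ)
    (x : ℕ → Fin n → ℝ) (u : ℕ → Fin m → ℝ) (w : ℕ → Fin n → ℝ) (y : ℕ → Fin p → ℝ)
    (hdyn : ∀ t, x (t + 1) = A.mulVec (x t) + B.mulVec (u t) + w t)
    (hout : ∀ t, y t = C.mulVec (x t)) (s k : ℕ) :
    y (s + k) = (C * A ^ k).mulVec (x s)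
      + ∑ j ∈ Finset.range k, ((C * A ^ (k - 1 - j) * B).mulVec (u (s + j))
          + (C * A ^ (k - 1 - j)).mulVec (w (s + j))) := by
  rw [hout, my_rollout A B x u w hdyn s k]
  simp only [Matrix.mulVec_add, ← Matrix.mulVecLin_apply, map_sum, map_add]
  simp only [Matrix.mulVecLin_apply, Matrix.mulVec_mulVec]
  congr 1
  refine Finset.sum_congr rfl fun j _ => ?_
  rw [← Matrix.mul_assoc]

end MyAux
section MyAux2

variable {n m p L : ℕ}

private lemma my_ind_sum {ι : Type*} [Fintype ι] [DecidableEq ι] (v : ι → ℝ) (P : ι → Prop)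
    [DecidablePred P] (a : ι) (hP : ∀ r, P r ↔ r = a) :
    ∑ r : ι, (if P r then (1:ℝ) else 0) * v r = v a := by
  have h : ∀ r, (if P r then (1:ℝ) else 0) * v r = if r = a then v r else 0 := by
    intro r
    by_cases h : P r
    · rw [if_pos h, one_mul, if_pos ((hP r).mp h)]
    · rw [if_neg h, zero_mul, if_neg fun e => h ((hP r).mpr e)]
  simp [h]

private lemma my_sum_range_ite (f : ℕ → ℝ) {i L' : ℕ} (h : i ≤ L') :
    ∑ j ∈ Finset.range L', (if j < i then f j else 0) = ∑ j ∈ Finset.range i, f j := by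
  rw [← Finset.sum_filter]
  congr 1
  ext j
  simp only [Finset.mem_filter, Finset.mem_range]
  omega

private lemma my_ctrbC_win (A : Matrix (Fin n) (Fin n) ℝ) (B : Matrix (Fin n) (Fin m) ℝ)
    (C : Matrix (Fin p) (Fin n) ℝ) (u : ℕ → Fin m → ℝ) (s : ℕ) :
    (C * ctrbMat n m L A B).mulVec (fun q => u (s + (q.1 : ℕ)) q.2)
      = ∑ j ∈ Finset.range L, (C * A ^ (L - 1 - j) * B).mulVec (u (s + j)) := by
  funext a
  simp only [Matrix.mulVec, dotProduct, Fintype.sum_prod_type, Finset.sum_apply]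
  rw [← Fin.sum_univ_eq_sum_range
    (fun j => ∑ b, (C * A ^ (L - 1 - j) * B) a b * u (s + j) b) L]
  refine Finset.sum_congr rfl fun j _ => Finset.sum_congr rfl fun b _ => ?_
  congr 1
  simp only [ctrbMat, Matrix.mul_apply, Matrix.of_apply, Finset.mul_sum, Finset.sum_mul,
    mul_assoc]
  exact Finset.sum_comm

private lemma my_selF_win (A : Matrix (Fin n) (Fin n) ℝ) (C : Matrix (Fin p) (Fin n) ℝ)
    (w : ℕ → Fin n → ℝ) (s : ℕ) :
    (selF p L).mulVec (fun q => rhoSig n p L A C w (s + (q.1 : ℕ)) q.2)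
      = ∑ j ∈ Finset.range L, (C * A ^ (L - 1 - j)).mulVec (w (s + j)) := by
  funext a
  rw [show (∑ j ∈ Finset.range L, (C * A ^ (L - 1 - j)).mulVec (w (s + j))) a
      = ∑ j ∈ Finset.range L, ((C * A ^ (L - 1 - j)).mulVec (w (s + j))) a from
    Finset.sum_apply a _ _]
  rw [← Fin.sum_univ_eq_sum_range (fun j => ((C * A ^ (L - 1 - j)).mulVec (w (s + j))) a) L]
  show ∑ q : Fin L × (Fin L × Fin p), selF p L a q * rhoSig n p L A C w (s + (q.1 : ℕ)) q.2 = _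
  rw [Fintype.sum_prod_type]
  refine Finset.sum_congr rfl fun j _ => ?_
  have hlt : L - 1 - (j : ℕ) < L := by have := j.isLt; omega
  have hind := my_ind_sum (fun r : Fin L × Fin p => rhoSig n p L A C w (s + (j : ℕ)) r)
    (fun r : Fin L × Fin p => (r.1 : ℕ) = L - 1 - (j : ℕ) ∧ a = r.2)
    (⟨⟨L - 1 - (j : ℕ), hlt⟩, a⟩)
    (fun r => by
      constructor
      · rintro ⟨h1, h2⟩
        exact Prod.ext (Fin.ext h1) h2.symm
      · rintro rfl
        exact ⟨rfl, rfl⟩)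
  simp only [selF, Matrix.of_apply]
  rw [hind]
  simp only [rhoSig, obsvMat, Matrix.mulVec, dotProduct, Matrix.of_apply]

private lemma my_selE_win (A : Matrix (Fin n) (Fin n) ℝ) (C : Matrix (Fin p) (Fin n) ℝ)
    (w : ℕ → Fin n → ℝ) (s : ℕ) :
    (selE p L).mulVec (fun q => rhoSig n p L A C w (s + (q.1 : ℕ)) q.2)
      = (toepGW n p L A C).mulVec (fun q => w (s + (q.1 : ℕ)) q.2) := by
  funext q
  obtain ⟨i, a⟩ := q
  show ∑ q' : Fin L × (Fin L × Fin p), selE p L (i, a) q' * rhoSig n p L A C w (s + (q'.1 : ℕ)) q'.2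
      = ∑ q' : Fin L × Fin n, toepGW n p L A C (i, a) q' * w (s + (q'.1 : ℕ)) q'.2
  rw [Fintype.sum_prod_type, Fintype.sum_prod_type]
  refine Finset.sum_congr rfl fun j _ => ?_
  by_cases hj : (j : ℕ) < (i : ℕ)
  · have hlt : (i : ℕ) - (j : ℕ) - 1 < L := by have := i.isLt; omega
    have hind := my_ind_sum (fun r : Fin L × Fin p => rhoSig n p L A C w (s + (j : ℕ)) r)
      (fun r : Fin L × Fin p => (j : ℕ) < (i : ℕ) ∧ (r.1 : ℕ) = (i : ℕ) - (j : ℕ) - 1 ∧ a = r.2)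
      (⟨⟨(i : ℕ) - (j : ℕ) - 1, hlt⟩, a⟩)
      (fun r => by
        constructor
        · rintro ⟨_, h1, h2⟩
          exact Prod.ext (Fin.ext h1) h2.symm
        · rintro rfl
          exact ⟨hj, rfl, rfl⟩)
    simp only [selE, Matrix.of_apply]
    rw [hind]
    simp only [rhoSig, obsvMat, toepGW, Matrix.mulVec, dotProduct, Matrix.of_apply,
      if_pos hj]
  · simp only [selE, toepGW, Matrix.of_apply]
    rw [Finset.sum_eq_zero, Finset.sum_eq_zero]
    · intro b _
      rw [if_neg hj, zero_mul]
    · intro r _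
      rw [if_neg (by tauto), zero_mul]

end MyAux2
section MyAux3

variable {n m p L : ℕ}

private lemma my_toepG_win (A : Matrix (Fin n) (Fin n) ℝ) (B : Matrix (Fin n) (Fin m) ℝ)
    (C : Matrix (Fin p) (Fin n) ℝ) (u : ℕ → Fin m → ℝ) (s : ℕ) (i : Fin L) (a : Fin p) :
    (toepG n m p L A B C).mulVec (fun q => u (s + (q.1 : ℕ)) q.2) (i, a)
      = ∑ j ∈ Finset.range (i : ℕ), ((C * A ^ ((i : ℕ) - 1 - j) * B).mulVec (u (s + j))) a := by
  show ∑ q' : Fin L × Fin m, toepG n m p L A B C (i, a) q' * u (s + (q'.1 : ℕ)) q'.2 = _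
  rw [Fintype.sum_prod_type]
  simp only [toepG, Matrix.of_apply, ite_mul, zero_mul, Finset.sum_ite_irrel,
    Finset.sum_const_zero]
  rw [Fin.sum_univ_eq_sum_range
    (fun j => if j < (i : ℕ) then ∑ b, (C * A ^ ((i : ℕ) - j - 1) * B) a b * u (s + j) b else 0) L,
    my_sum_range_ite _ (le_of_lt i.isLt)]
  refine Finset.sum_congr rfl fun j hj => ?_
  have : (i : ℕ) - j - 1 = (i : ℕ) - 1 - j := by omega
  rw [this]
  rfl

private lemma my_toepGW_win (A : Matrix (Fin n) (Fin n) ℝ)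
    (C : Matrix (Fin p) (Fin n) ℝ) (w : ℕ → Fin n → ℝ) (s : ℕ) (i : Fin L) (a : Fin p) :
    (toepGW n p L A C).mulVec (fun q => w (s + (q.1 : ℕ)) q.2) (i, a)
      = ∑ j ∈ Finset.range (i : ℕ), ((C * A ^ ((i : ℕ) - 1 - j)).mulVec (w (s + j))) a := by
  show ∑ q' : Fin L × Fin n, toepGW n p L A C (i, a) q' * w (s + (q'.1 : ℕ)) q'.2 = _
  rw [Fintype.sum_prod_type]
  simp only [toepGW, Matrix.of_apply, ite_mul, zero_mul, Finset.sum_ite_irrel,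
    Finset.sum_const_zero]
  rw [Fin.sum_univ_eq_sum_range
    (fun j => if j < (i : ℕ) then ∑ b, (C * A ^ ((i : ℕ) - j - 1)) a b * w (s + j) b else 0) L,
    my_sum_range_ite _ (le_of_lt i.isLt)]
  refine Finset.sum_congr rfl fun j hj => ?_
  have : (i : ℕ) - j - 1 = (i : ℕ) - 1 - j := by omega
  rw [this]
  rfl

private lemma my_ywin (A : Matrix (Fin n) (Fin n) ℝ) (B : Matrix (Fin n) (Fin m) ℝ)
    (C : Matrix (Fin p) (Fin n) ℝ)
    (x : ℕ → Fin n → ℝ) (u : ℕ → Fin m → ℝ) (w : ℕ → Fin n → ℝ) (y : ℕ → Fin p → ℝ)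
    (hdyn : ∀ t, x (t + 1) = A.mulVec (x t) + B.mulVec (u t) + w t)
    (hout : ∀ t, y t = C.mulVec (x t)) (s : ℕ) :
    (fun q : Fin L × Fin p => y (s + (q.1 : ℕ)) q.2)
      = (obsvMat n p L A C).mulVec (x s)
        + (toepG n m p L A B C).mulVec (fun q => u (s + (q.1 : ℕ)) q.2)
        + (toepGW n p L A C).mulVec (fun q => w (s + (q.1 : ℕ)) q.2) := by
  funext q
  obtain ⟨i, a⟩ := q
  have hy := congrFun (my_y_eq A B C x u w y hdyn hout s (i : ℕ)) a
  simp only [Pi.add_apply, Finset.sum_apply] at hy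
  show y (s + (i : ℕ)) a = _
  rw [hy]
  simp only [Pi.add_apply]
  rw [my_toepG_win, my_toepGW_win]
  have hobs : (obsvMat n p L A C).mulVec (x s) (i, a) = ((C * A ^ (i : ℕ)).mulVec (x s)) a := by
    simp [obsvMat, Matrix.mulVec, dotProduct]
  rw [hobs, Finset.sum_add_distrib, ← add_assoc]

private lemma my_key (hL : 1 ≤ L) (A : Matrix (Fin n) (Fin n) ℝ) (B : Matrix (Fin n) (Fin m) ℝ)
    (C : Matrix (Fin p) (Fin n) ℝ)
    (x : ℕ → Fin n → ℝ) (u : ℕ → Fin m → ℝ) (w : ℕ → Fin n → ℝ) (y : ℕ → Fin p → ℝ)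
    (hdyn : ∀ t, x (t + 1) = A.mulVec (x t) + B.mulVec (u t) + w t)
    (hout : ∀ t, y t = C.mulVec (x t))
    (ΓY : Matrix (Fin p) (Fin L × Fin p) ℝ)
    (hΓY : ΓY * obsvMat n p L A C = C * A ^ L)
    (ΓU : Matrix (Fin p) (Fin L × Fin m) ℝ)
    (hΓU : ΓU = C * ctrbMat n m L A B - ΓY * toepG n m p L A B C) (s : ℕ) :
    y (s + L) = ΓU.mulVec (fun q => u (s + (q.1 : ℕ)) q.2)
      + ΓY.mulVec (fun q => y (s + (q.1 : ℕ)) q.2)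
      + (selF p L - ΓY * selE p L).mulVec (fun q => rhoSig n p L A C w (s + (q.1 : ℕ)) q.2) := by
  have hE : (ΓY * selE p L).mulVec (fun q => rhoSig n p L A C w (s + (q.1 : ℕ)) q.2)
      = (ΓY * toepGW n p L A C).mulVec (fun q => w (s + (q.1 : ℕ)) q.2) := by
    rw [← Matrix.mulVec_mulVec, ← Matrix.mulVec_mulVec, my_selE_win A C w s]
  rw [hΓU, Matrix.sub_mulVec, Matrix.sub_mulVec,
    my_ywin A B C x u w y hdyn hout s, Matrix.mulVec_add, Matrix.mulVec_add,
    Matrix.mulVec_mulVec, Matrix.mulVec_mulVec, Matrix.mulVec_mulVec, hΓY, hE,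
    my_selF_win A C w s, my_ctrbC_win A B C u s,
    my_y_eq A B C x u w y hdyn hout s L, Finset.sum_add_distrib]
  abel

end MyAux3
section MyAux4

variable {n m p L : ℕ}

private lemma my_shift_sum {d : Type*} [Fintype d] [DecidableEq d] (q : Fin L × d)
    (v : Fin L × d → ℝ) :
    ∑ q' : Fin L × d, (if (q'.1 : ℕ) = (q.1 : ℕ) + 1 ∧ q.2 = q'.2 then (1:ℝ) else 0) * v q'
      = if h : (q.1 : ℕ) + 1 < L then v (⟨(q.1 : ℕ) + 1, h⟩, q.2) else 0 := by
  by_cases h : (q.1 : ℕ) + 1 < L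
  · rw [dif_pos h]
    exact my_ind_sum v _ (⟨(q.1 : ℕ) + 1, h⟩, q.2) (fun r => by
      constructor
      · rintro ⟨h1, h2⟩
        exact Prod.ext (Fin.ext h1) h2.symm
      · rintro rfl
        exact ⟨rfl, rfl⟩)
  · rw [dif_neg h]
    refine Finset.sum_eq_zero fun r _ => ?_
    rw [if_neg, zero_mul]
    rintro ⟨h1, -⟩
    exact h (h1 ▸ r.1.isLt)

private lemma my_row_sum {d : ℕ} (c : ℕ) (b : Fin d) (v : Fin d → ℝ) :
    ∑ r : Fin d, (if c = L - 1 ∧ b = r then (1:ℝ) else 0) * v r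
      = if c = L - 1 then v b else 0 := by
  by_cases h : c = L - 1
  · rw [if_pos h]
    exact my_ind_sum v _ b (fun r => by
      constructor
      · rintro ⟨-, h2⟩
        exact h2.symm
      · rintro rfl
        exact ⟨h, rfl⟩)
  · rw [if_neg h]
    refine Finset.sum_eq_zero fun r _ => ?_
    rw [if_neg (by tauto), zero_mul]

end MyAux4

/-- auxiliary model, state equation:
`𝐱_{t+1} = 𝐀 𝐱_t + 𝐁 u_t + 𝐰_t` for every `t ≥ L`. -/
theorem aux_state_equation (n m p L : ℕ) (hL : 1 ≤ L)
    (A : Matrix (Fin n) (Fin n) ℝ) (B : Matrix (Fin n) (Fin m) ℝ)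
    (C : Matrix (Fin p) (Fin n) ℝ)
    (x : ℕ → Fin n → ℝ) (u : ℕ → Fin m → ℝ) (w : ℕ → Fin n → ℝ) (y : ℕ → Fin p → ℝ)
    (hdyn : ∀ t, x (t + 1) = A.mulVec (x t) + B.mulVec (u t) + w t)
    (hout : ∀ t, y t = C.mulVec (x t))
    (ΓY : Matrix (Fin p) (Fin L × Fin p) ℝ)
    (hΓY : ΓY * obsvMat n p L A C = C * A ^ L)
    (ΓU : Matrix (Fin p) (Fin L × Fin m) ℝ)
    (hΓU : ΓU = C * ctrbMat n m L A B - ΓY * toepG n m p L A B C) :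
    ∀ t, L ≤ t →
      auxState n m p L A C u y w (t + 1)
        = (auxA m p L ΓU ΓY (selF p L - ΓY * selE p L)).mulVec
            (auxState n m p L A C u y w t)
          + (auxB m p L).mulVec (u t) + auxW n m p L A C w t := by
  intro t ht
  funext idx
  simp only [Pi.add_apply]
  rcases idx with q | q | q
  · -- u block
    have hA : (auxA m p L ΓU ΓY (selF p L - ΓY * selE p L)).mulVec
        (auxState n m p L A C u y w t) (Sum.inl q)
        = if h : (q.1 : ℕ) + 1 < L then stackWin L u t (⟨(q.1 : ℕ) + 1, h⟩, q.2) else 0 := by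
      show (∑ c, auxA m p L ΓU ΓY (selF p L - ΓY * selE p L) (Sum.inl q) c
          * auxState n m p L A C u y w t c) = _
      rw [Fintype.sum_sum_type, Fintype.sum_sum_type]
      simp only [auxA, auxState, Matrix.of_apply, Sum.elim_inl, Sum.elim_inr, zero_mul,
        Finset.sum_const_zero, add_zero]
      exact my_shift_sum q (stackWin L u t)
    have hB : (auxB m p L).mulVec (u t) (Sum.inl q)
        = if (q.1 : ℕ) = L - 1 then u t q.2 else 0 := by
      show (∑ c, auxB m p L (Sum.inl q) c * u t c) = _
      simp only [auxB, Matrix.of_apply]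
      exact my_row_sum (q.1 : ℕ) q.2 (u t)
    rw [hA, hB]
    show stackWin L u (t + 1) q = _
    simp only [auxW, Sum.elim_inl, Pi.zero_apply, stackWin, add_zero]
    by_cases h : (q.1 : ℕ) + 1 < L
    · rw [dif_pos h, if_neg (by omega), add_zero]
      have : t + 1 - L + (q.1 : ℕ) = t - L + ((q.1 : ℕ) + 1) := by omega
      rw [this]
    · have hq : (q.1 : ℕ) = L - 1 := by have := q.1.isLt; omega
      rw [dif_neg h, if_pos hq, zero_add]
      have : t + 1 - L + (q.1 : ℕ) = t := by omega
      rw [this]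
  · -- y block
    have hB : (auxB m p L).mulVec (u t) (Sum.inr (Sum.inl q)) = 0 := by
      show (∑ c, auxB m p L (Sum.inr (Sum.inl q)) c * u t c) = 0
      simp [auxB]
    rw [hB, add_zero]
    by_cases hq : (q.1 : ℕ) = L - 1
    · have hA : (auxA m p L ΓU ΓY (selF p L - ΓY * selE p L)).mulVec
          (auxState n m p L A C u y w t) (Sum.inr (Sum.inl q))
          = ΓU.mulVec (stackWin L u t) q.2 + ΓY.mulVec (stackWin L y t) q.2
            + (selF p L - ΓY * selE p L).mulVec (stackWin L (rhoSig n p L A C w) t) q.2 := by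
        show (∑ c, auxA m p L ΓU ΓY (selF p L - ΓY * selE p L) (Sum.inr (Sum.inl q)) c
            * auxState n m p L A C u y w t c) = _
        rw [Fintype.sum_sum_type, Fintype.sum_sum_type]
        simp only [auxA, auxState, Matrix.of_apply, Sum.elim_inl, Sum.elim_inr, if_pos hq]
        simp only [Matrix.mulVec, dotProduct]
        ring
      rw [hA]
      show stackWin L y (t + 1) q = _
      have hkey := congrFun (my_key hL A B C x u w y hdyn hout ΓY hΓY ΓU hΓU (t - L)) q.2
      have hts : t - L + L = t := Nat.sub_add_cancel ht
      rw [hts] at hkey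
      simp only [Pi.add_apply] at hkey
      simp only [auxW, Sum.elim_inr, Sum.elim_inl, Pi.zero_apply, stackWin, add_zero]
      have : t + 1 - L + (q.1 : ℕ) = t := by omega
      rw [this]
      exact hkey
    · have hA : (auxA m p L ΓU ΓY (selF p L - ΓY * selE p L)).mulVec
          (auxState n m p L A C u y w t) (Sum.inr (Sum.inl q))
          = if h : (q.1 : ℕ) + 1 < L then stackWin L y t (⟨(q.1 : ℕ) + 1, h⟩, q.2) else 0 := by
        show (∑ c, auxA m p L ΓU ΓY (selF p L - ΓY * selE p L) (Sum.inr (Sum.inl q)) c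
            * auxState n m p L A C u y w t c) = _
        rw [Fintype.sum_sum_type, Fintype.sum_sum_type]
        simp only [auxA, auxState, Matrix.of_apply, Sum.elim_inl, Sum.elim_inr, if_neg hq,
          zero_mul, Finset.sum_const_zero, add_zero, zero_add]
        exact my_shift_sum q (stackWin L y t)
      rw [hA]
      show stackWin L y (t + 1) q = _
      simp only [auxW, Sum.elim_inr, Sum.elim_inl, Pi.zero_apply, stackWin, add_zero]
      have h : (q.1 : ℕ) + 1 < L := by have := q.1.isLt; omega
      rw [dif_pos h]
      have : t + 1 - L + (q.1 : ℕ) = t - L + ((q.1 : ℕ) + 1) := by omega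
      rw [this]
  · -- ρ block
    have hB : (auxB m p L).mulVec (u t) (Sum.inr (Sum.inr q)) = 0 := by
      show (∑ c, auxB m p L (Sum.inr (Sum.inr q)) c * u t c) = 0
      simp [auxB]
    have hA : (auxA m p L ΓU ΓY (selF p L - ΓY * selE p L)).mulVec
        (auxState n m p L A C u y w t) (Sum.inr (Sum.inr q))
        = if h : (q.1 : ℕ) + 1 < L
          then stackWin L (rhoSig n p L A C w) t (⟨(q.1 : ℕ) + 1, h⟩, q.2) else 0 := by
      show (∑ c, auxA m p L ΓU ΓY (selF p L - ΓY * selE p L) (Sum.inr (Sum.inr q)) c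
          * auxState n m p L A C u y w t c) = _
      rw [Fintype.sum_sum_type, Fintype.sum_sum_type]
      simp only [auxA, auxState, Matrix.of_apply, Sum.elim_inl, Sum.elim_inr, zero_mul,
        Finset.sum_const_zero, add_zero, zero_add]
      exact my_shift_sum q (stackWin L (rhoSig n p L A C w) t)
    rw [hA, hB, add_zero]
    show stackWin L (rhoSig n p L A C w) (t + 1) q = _
    simp only [auxW, Sum.elim_inr, stackWin]
    by_cases h : (q.1 : ℕ) + 1 < L
    · rw [dif_pos h, if_neg (by omega), add_zero]
      have : t + 1 - L + (q.1 : ℕ) = t - L + ((q.1 : ℕ) + 1) := by omega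
      rw [this]
    · have hq : (q.1 : ℕ) = L - 1 := by have := q.1.isLt; omega
      rw [dif_neg h, if_pos hq, zero_add]
      have : t + 1 - L + (q.1 : ℕ) = t := by omega
      rw [this]

end
end

section
/- (Auxiliary model, output equation.) Suppose Γ_Y1 ∈ ℝ^{p×pL} satisfies Γ_Y1 𝒪 = C A^L and set Γ_U1 := C 𝒞 − Γ_Y1 G. Let v : ℕ → ℝ^p be any measurement-noise sequence and define the measured output y_t := y°_t + v_t. Then for every t ≥ L, y_t = 𝐂 𝐱_t + v_t, where 𝐱_t := col(u_{[t-L,t)}, y°_{[t-L,t)}, ρ_{[t-L,t)}) and 𝐂 := [Γ_U1 | Γ_Y1 | F − Γ_Y1 E] ∈ ℝ^{p×(mL+pL+pL²)}. -/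
open Matrix
open scoped Kronecker

noncomputable section

/-! Write `t = s + L`. Unrolling the dynamics from `x_s` gives, for the past window and the
current output,
`y°_{[s,s+L)} = 𝒪 x_s + G u_{[s,s+L)} + E ρ_{[s,s+L)}` and
`y°_{s+L} = C A^L x_s + C 𝒞 u_{[s,s+L)} + F ρ_{[s,s+L)}`,
because the noise `w_j` reaches the output `k + 1` steps later as `C A^k w_j`, which is block `k`
of `ρ_j`. Applying `Γ_Y1` to the first identity and using `Γ_Y1 𝒪 = C A^L` eliminates `x_s`;
what remains of `G` and `E` cancels against `Γ_U1 = C 𝒞 − Γ_Y1 G` and `F − Γ_Y1 E`. -/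

theorem state_eq_of_dynamics {R ι κ : Type*} [Semiring R] [Fintype ι] [DecidableEq ι]
    [Fintype κ] (A : Matrix ι ι R) (B : Matrix ι κ R) (x : ℕ → ι → R) (u : ℕ → κ → R)
    (w : ℕ → ι → R) (hdyn : ∀ t, x (t + 1) = A *ᵥ x t + B *ᵥ u t + w t) (s k : ℕ) :
    x (s + k) = A ^ k *ᵥ x s
      + ∑ j ∈ Finset.range k, A ^ (k - j - 1) *ᵥ (B *ᵥ u (s + j) + w (s + j)) := by
  induction k with
  | zero => simp
  | succ k ih =>
    have hpow : ∀ j ∈ Finset.range k, A * A ^ (k - j - 1) = A ^ (k + 1 - j - 1) := by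
      intro j hj
      rw [show k + 1 - j - 1 = k - j - 1 + 1 by grind, pow_succ']
    rw [← add_assoc, hdyn, ih, Finset.sum_range_succ, mulVec_add, mulVec_mulVec, ← pow_succ',
      mulVec_sum]
    simp only [mulVec_mulVec]
    rw [Finset.sum_congr rfl fun j hj => by rw [hpow j hj]]
    simp only [Nat.add_sub_cancel_left, Nat.sub_self, pow_zero, one_mulVec]
    abel

theorem Fin.sum_univ_ite_lt {M : Type*} [AddCommMonoid M] {L i : ℕ} (hi : i ≤ L) (g : ℕ → M) :
    ∑ j : Fin L, (if (j : ℕ) < i then g j else 0) = ∑ j ∈ Finset.range i, g j := by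
  rw [Fin.sum_univ_eq_sum_range (fun j => if j < i then g j else 0), ← Finset.sum_filter]
  congr 1
  ext j
  simp only [Finset.mem_filter, Finset.mem_range]
  omega

theorem Fin.sum_univ_ite_val_eq {M : Type*} [AddCommMonoid M] {L c : ℕ} (hc : c < L)
    (g : ℕ → M) : ∑ k : Fin L, (if (k : ℕ) = c then g k else 0) = g c := by
  rw [Fin.sum_univ_eq_sum_range (fun k => if k = c then g k else 0), Finset.sum_ite_eq',
    if_pos (Finset.mem_range.mpr hc)]

theorem output_eq_of_dynamics {R ι κ ο : Type*} [Semiring R] [Fintype ι] [DecidableEq ι]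
    [Fintype κ] (A : Matrix ι ι R) (B : Matrix ι κ R) (C : Matrix ο ι R) (x : ℕ → ι → R)
    (u : ℕ → κ → R) (w : ℕ → ι → R) (y : ℕ → ο → R)
    (hdyn : ∀ t, x (t + 1) = A *ᵥ x t + B *ᵥ u t + w t) (hout : ∀ t, y t = C *ᵥ x t)
    (s k : ℕ) :
    y (s + k) = (C * A ^ k) *ᵥ x s
      + ∑ j ∈ Finset.range k,
          ((C * A ^ (k - j - 1) * B) *ᵥ u (s + j) + (C * A ^ (k - j - 1)) *ᵥ w (s + j)) := by
  rw [hout, state_eq_of_dynamics A B x u w hdyn, mulVec_add, mulVec_sum, mulVec_mulVec]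
  simp only [mulVec_add, mulVec_mulVec, Matrix.mul_assoc]

section BlockProducts

variable {n m p L : ℕ} (A : Matrix (Fin n) (Fin n) ℝ) (B : Matrix (Fin n) (Fin m) ℝ)
  (C : Matrix (Fin p) (Fin n) ℝ)

theorem stackWin_add_self {d : Type*} (z : ℕ → d → ℝ) (s : ℕ) (q : Fin L × d) :
    stackWin L z (s + L) q = z (s + q.1) q.2 := by
  simp [stackWin]

theorem obsvMat_mulVec_apply (v : Fin n → ℝ) (i : Fin L) (a : Fin p) :
    (obsvMat n p L A C *ᵥ v) (i, a) = ((C * A ^ (i : ℕ)) *ᵥ v) a := rfl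

theorem rhoSig_apply (w : ℕ → Fin n → ℝ) (t : ℕ) (k : Fin L) (a : Fin p) :
    rhoSig n p L A C w t (k, a) = ((C * A ^ (k : ℕ)) *ᵥ w t) a := rfl

theorem ctrbMat_mulVec (z : Fin L × Fin m → ℝ) :
    ctrbMat n m L A B *ᵥ z = ∑ j : Fin L, (A ^ (L - 1 - j) * B) *ᵥ fun b => z (j, b) := by
  ext r
  simp [ctrbMat, mulVec, dotProduct, Fintype.sum_prod_type, Finset.sum_apply]

theorem toepG_mulVec_apply (z : Fin L × Fin m → ℝ) (i : Fin L) (a : Fin p) :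
    (toepG n m p L A B C *ᵥ z) (i, a)
      = ∑ j : Fin L, if (j : ℕ) < i then ((C * A ^ (i - j - 1 : ℕ) * B) *ᵥ fun b => z (j, b)) a
          else 0 := by
  simp [toepG, mulVec, dotProduct, Fintype.sum_prod_type, ite_mul, Finset.sum_ite_irrel]

theorem selE_mulVec_apply (z : Fin L × (Fin L × Fin p) → ℝ) (i : Fin L) (a : Fin p) :
    (selE p L *ᵥ z) (i, a)
      = ∑ j : Fin L, ∑ k : Fin L,
          if (j : ℕ) < i ∧ (k : ℕ) = i - j - 1 then z (j, (k, a)) else 0 := by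
  simp [selE, mulVec, dotProduct, Fintype.sum_prod_type, ite_mul, ite_and, Finset.sum_ite_irrel]

theorem selF_mulVec (z : Fin L × (Fin L × Fin p) → ℝ) :
    selF p L *ᵥ z = fun a => ∑ j : Fin L, z (j, (j.rev, a)) := by
  have hrev : ∀ j k : Fin L, (k : ℕ) = L - 1 - j ↔ k = j.rev := by
    intro j k
    rw [Fin.ext_iff, Fin.val_rev]
    omega
  ext a
  simp [selF, mulVec, dotProduct, Fintype.sum_prod_type, ite_mul, ite_and, hrev]

end BlockProducts

section Windows

variable {n m p L : ℕ} {A : Matrix (Fin n) (Fin n) ℝ} {B : Matrix (Fin n) (Fin m) ℝ}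
  {C : Matrix (Fin p) (Fin n) ℝ}

theorem selE_mulVec_stackWin_rhoSig (w : ℕ → Fin n → ℝ) (s : ℕ) (i : Fin L) (a : Fin p) :
    (selE p L *ᵥ stackWin L (rhoSig n p L A C w) (s + L)) (i, a)
      = ∑ j : Fin L, if (j : ℕ) < i then ((C * A ^ (i - j - 1 : ℕ)) *ᵥ w (s + j)) a else 0 := by
  rw [selE_mulVec_apply]
  refine Finset.sum_congr rfl fun j _ => ?_
  split_ifs with hj
  · simp only [hj, true_and, stackWin_add_self, rhoSig_apply]
    exact Fin.sum_univ_ite_val_eq (by omega) fun k => ((C * A ^ k) *ᵥ w (s + j)) a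
  · simp [hj]

variable {x : ℕ → Fin n → ℝ} {u : ℕ → Fin m → ℝ} {w : ℕ → Fin n → ℝ} {y : ℕ → Fin p → ℝ}

theorem stackWin_output_eq (hdyn : ∀ t, x (t + 1) = A *ᵥ x t + B *ᵥ u t + w t)
    (hout : ∀ t, y t = C *ᵥ x t) (s : ℕ) :
    stackWin L y (s + L) = obsvMat n p L A C *ᵥ x s + toepG n m p L A B C *ᵥ stackWin L u (s + L)
      + selE p L *ᵥ stackWin L (rhoSig n p L A C w) (s + L) := by
  ext ⟨i, a⟩
  simp only [Pi.add_apply, obsvMat_mulVec_apply, toepG_mulVec_apply, selE_mulVec_stackWin_rhoSig,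
    stackWin_add_self, output_eq_of_dynamics A B C x u w y hdyn hout, Finset.sum_apply]
  rw [Finset.sum_add_distrib, ← Fin.sum_univ_ite_lt i.isLt.le, ← Fin.sum_univ_ite_lt i.isLt.le,
    add_assoc]

theorem output_eq_window (hdyn : ∀ t, x (t + 1) = A *ᵥ x t + B *ᵥ u t + w t)
    (hout : ∀ t, y t = C *ᵥ x t) (s : ℕ) :
    y (s + L) = (C * A ^ L) *ᵥ x s + (C * ctrbMat n m L A B) *ᵥ stackWin L u (s + L)
      + selF p L *ᵥ stackWin L (rhoSig n p L A C w) (s + L) := by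
  rw [output_eq_of_dynamics A B C x u w y hdyn hout, Finset.sum_add_distrib, add_assoc,
    ← mulVec_mulVec _ C (ctrbMat n m L A B), ctrbMat_mulVec, selF_mulVec, mulVec_sum]
  congr 2
  · rw [← Fin.sum_univ_eq_sum_range fun j => (C * A ^ (L - j - 1) * B) *ᵥ u (s + j)]
    refine Finset.sum_congr rfl fun j _ => ?_
    simp only [stackWin_add_self, mulVec_mulVec, Matrix.mul_assoc, Nat.sub_right_comm]
  · ext a
    rw [Finset.sum_apply,
      ← Fin.sum_univ_eq_sum_range fun j => ((C * A ^ (L - j - 1)) *ᵥ w (s + j)) a]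
    simp only [stackWin_add_self, rhoSig_apply, Fin.val_rev, Nat.sub_sub]

end Windows

theorem auxC_mulVec_sumElim {m p L : ℕ} (ΓU : Matrix (Fin p) (Fin L × Fin m) ℝ)
    (ΓY : Matrix (Fin p) (Fin L × Fin p) ℝ) (W : Matrix (Fin p) (Fin L × (Fin L × Fin p)) ℝ)
    (a : Fin L × Fin m → ℝ) (b : Fin L × Fin p → ℝ) (c : Fin L × (Fin L × Fin p) → ℝ) :
    auxC m p L ΓU ΓY W *ᵥ Sum.elim a (Sum.elim b c) = ΓU *ᵥ a + ΓY *ᵥ b + W *ᵥ c := by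
  ext
  simp [auxC, mulVec, dotProduct, Fintype.sum_sum_type, add_assoc]

theorem aux_output_equation_general (n m p L : ℕ)
    (A : Matrix (Fin n) (Fin n) ℝ) (B : Matrix (Fin n) (Fin m) ℝ)
    (C : Matrix (Fin p) (Fin n) ℝ)
    (x : ℕ → Fin n → ℝ) (u : ℕ → Fin m → ℝ) (w : ℕ → Fin n → ℝ) (y : ℕ → Fin p → ℝ)
    (hdyn : ∀ t, x (t + 1) = A.mulVec (x t) + B.mulVec (u t) + w t)
    (hout : ∀ t, y t = C.mulVec (x t))
    (ΓY : Matrix (Fin p) (Fin L × Fin p) ℝ)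
    (hΓY : ΓY * obsvMat n p L A C = C * A ^ L)
    (ΓU : Matrix (Fin p) (Fin L × Fin m) ℝ)
    (hΓU : ΓU = C * ctrbMat n m L A B - ΓY * toepG n m p L A B C)
    (v : ℕ → Fin p → ℝ) :
    ∀ t, L ≤ t →
      y t + v t
        = (auxC m p L ΓU ΓY (selF p L - ΓY * selE p L)).mulVec
            (auxState n m p L A C u y w t) + v t := by
  intro t ht
  obtain ⟨s, rfl⟩ := Nat.exists_eq_add_of_le' ht
  rw [auxState, auxC_mulVec_sumElim, stackWin_output_eq hdyn hout, output_eq_window hdyn hout, hΓU]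
  simp only [sub_mulVec, mulVec_add, mulVec_mulVec, hΓY]
  abel

/-- auxiliary model, output equation: for any measurement noise `v`, the
measured output `y_t = y°_t + v_t` satisfies `y_t = 𝐂 𝐱_t + v_t` for every `t ≥ L`. -/
theorem aux_output_equation (n m p L : ℕ) (hL : 1 ≤ L)
    (A : Matrix (Fin n) (Fin n) ℝ) (B : Matrix (Fin n) (Fin m) ℝ)
    (C : Matrix (Fin p) (Fin n) ℝ)
    (x : ℕ → Fin n → ℝ) (u : ℕ → Fin m → ℝ) (w : ℕ → Fin n → ℝ) (y : ℕ → Fin p → ℝ)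
    (hdyn : ∀ t, x (t + 1) = A.mulVec (x t) + B.mulVec (u t) + w t)
    (hout : ∀ t, y t = C.mulVec (x t))
    (ΓY : Matrix (Fin p) (Fin L × Fin p) ℝ)
    (hΓY : ΓY * obsvMat n p L A C = C * A ^ L)
    (ΓU : Matrix (Fin p) (Fin L × Fin m) ℝ)
    (hΓU : ΓU = C * ctrbMat n m L A B - ΓY * toepG n m p L A B C)
    (v : ℕ → Fin p → ℝ) :
    ∀ t, L ≤ t →
      y t + v t
        = (auxC m p L ΓU ΓY (selF p L - ΓY * selE p L)).mulVec
            (auxState n m p L A C u y w t) + v t :=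
  aux_output_equation_general n m p L A B C x u w y hdyn hout ΓY hΓY ΓU hΓU v

end
end

section
/- (Detectability of the auxiliary model.) Suppose 𝒪 has full column rank n, suppose Γ_Y1 ∈ ℝ^{p×pL} satisfies Γ_Y1 𝒪 = C A^L, and set Γ_U1 := C 𝒞 − Γ_Y1 G. Then the auxiliary pair (𝐀, 𝐂) is detectable: there exists 𝐋 ∈ ℝ^{n_aux×p} such that 𝐀 − 𝐋𝐂 is Schur stable, where 𝐂 := [Γ_U1 | Γ_Y1 | F − Γ_Y1 E] ∈ ℝ^{p×n_aux}. -/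
open Matrix
open scoped Kronecker

noncomputable section

/-- Block level of an auxiliary index. -/
def auxIdxLevel (m p L : ℕ) : AuxIdx m p L → ℕ :=
  fun x => match x with
  | Sum.inl q => q.1
  | Sum.inr (Sum.inl q) => q.1
  | Sum.inr (Sum.inr q) => q.1

/-- A gain that cancels the last `y°`-row block. -/
def auxGain (m p L : ℕ) : Matrix (AuxIdx m p L) (Fin p) ℝ :=
  Matrix.of fun r c => match r with
  | Sum.inr (Sum.inl q) => if (q.1 : ℕ) = L - 1 ∧ q.2 = c then 1 else 0
  | _ => 0

lemma schurStable_of_pow_eq_zero {ι : Type*} [Fintype ι] [DecidableEq ι]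
    (M : Matrix ι ι ℝ) (k : ℕ) (h : M ^ k = 0) : SchurStable M := by
  intro z hz
  set N := M.map (algebraMap ℝ ℂ) with hN
  have hNk : N ^ k = 0 := by
    have hmap : ∀ P : Matrix ι ι ℝ, P.map (algebraMap ℝ ℂ) = (algebraMap ℝ ℂ).mapMatrix P :=
      fun _ => rfl
    rw [hN, hmap, ← map_pow, h]
    simp
  by_contra hnot
  have hz0 : z ≠ 0 := by
    intro h0
    rw [h0] at hnot
    simp at hnot
  have hzu : IsUnit z := isUnit_iff_ne_zero.mpr hz0
  rw [spectrum.mem_iff] at hz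
  apply hz
  have hcomm : Commute (algebraMap ℂ (Matrix ι ι ℂ) z⁻¹) N := Algebra.commutes _ _
  have hnil : IsNilpotent (algebraMap ℂ (Matrix ι ι ℂ) z⁻¹ * N) := by
    refine ⟨k, ?_⟩
    rw [hcomm.mul_pow, hNk, mul_zero]
  have hfac : algebraMap ℂ (Matrix ι ι ℂ) z - N =
      algebraMap ℂ (Matrix ι ι ℂ) z * (1 - algebraMap ℂ (Matrix ι ι ℂ) z⁻¹ * N) := by
    rw [mul_sub, mul_one, ← mul_assoc, ← _root_.map_mul, mul_inv_cancel₀ hz0, _root_.map_one, one_mul]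
  rw [hfac]
  exact (hzu.map (algebraMap ℂ (Matrix ι ι ℂ))).mul (IsNilpotent.isUnit_one_sub hnil)

/-- detectability of the auxiliary model: if `𝒪` has full column rank `n`
and `Γ_Y1 𝒪 = C A^L`, then `(𝐀, 𝐂)` is detectable. -/
theorem aux_detectable (n m p L : ℕ) (hL : 1 ≤ L)
    (A : Matrix (Fin n) (Fin n) ℝ) (B : Matrix (Fin n) (Fin m) ℝ)
    (C : Matrix (Fin p) (Fin n) ℝ)
    (hrank : (obsvMat n p L A C).rank = n)
    (ΓY : Matrix (Fin p) (Fin L × Fin p) ℝ)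
    (hΓY : ΓY * obsvMat n p L A C = C * A ^ L)
    (ΓU : Matrix (Fin p) (Fin L × Fin m) ℝ)
    (hΓU : ΓU = C * ctrbMat n m L A B - ΓY * toepG n m p L A B C) :
    ∃ Lg : Matrix (AuxIdx m p L) (Fin p) ℝ,
      SchurStable (auxA m p L ΓU ΓY (selF p L - ΓY * selE p L)
        - Lg * auxC m p L ΓU ΓY (selF p L - ΓY * selE p L)) := by
  set W := selF p L - ΓY * selE p L with hW
  refine ⟨auxGain m p L, ?_⟩
  set M := auxA m p L ΓU ΓY W - auxGain m p L * auxC m p L ΓU ΓY W with hM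
  -- entries of the gain times output matrix
  have hLC : ∀ r c, (auxGain m p L * auxC m p L ΓU ΓY W) r c =
      match r with
      | Sum.inr (Sum.inl q) =>
          if (q.1 : ℕ) = L - 1 then auxC m p L ΓU ΓY W q.2 c else 0
      | _ => 0 := by
    intro r c
    cases r with
    | inl q => simp [Matrix.mul_apply, auxGain]
    | inr r' =>
      cases r' with
      | inl q =>
        by_cases h : (q.1 : ℕ) = L - 1 <;>
          simp [Matrix.mul_apply, auxGain, h, ite_and]
      | inr q => simp [Matrix.mul_apply, auxGain]
  -- key structural property: nonzero entries raise the level by exactly one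
  have hkey : ∀ r c, M r c ≠ 0 → auxIdxLevel m p L c = auxIdxLevel m p L r + 1 := by
    intro r c hrc
    rw [hM, Matrix.sub_apply, hLC] at hrc
    cases r with
    | inl q =>
      cases c with
      | inl q' =>
        simp only [auxA, Matrix.of_apply, sub_zero] at hrc
        by_cases h : (q'.1 : ℕ) = (q.1 : ℕ) + 1 ∧ q.2 = q'.2
        · exact h.1
        · simp [h] at hrc
      | inr c' =>
        cases c' <;> simp [auxA] at hrc
    | inr r' =>
      cases r' with
      | inl q =>
        by_cases h : (q.1 : ℕ) = L - 1
        · exfalso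
          apply hrc
          cases c with
          | inl q' => simp [auxA, auxC, h]
          | inr c' => cases c' <;> simp [auxA, auxC, h]
        · simp only [h, if_false, sub_zero] at hrc
          cases c with
          | inl q' => simp [auxA, h] at hrc
          | inr c' =>
            cases c' with
            | inl q' =>
              simp only [auxA, Matrix.of_apply, h, if_false] at hrc
              by_cases h2 : (q'.1 : ℕ) = (q.1 : ℕ) + 1 ∧ q.2 = q'.2
              · exact h2.1
              · simp [h2] at hrc
            | inr q' => simp [auxA, h] at hrc
      | inr q =>
        cases c with
        | inl q' => simp [auxA] at hrc
        | inr c' =>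
          cases c' with
          | inl q' => simp [auxA] at hrc
          | inr q' =>
            simp only [auxA, Matrix.of_apply, sub_zero] at hrc
            by_cases h2 : (q'.1 : ℕ) = (q.1 : ℕ) + 1 ∧ q.2 = q'.2
            · exact h2.1
            · simp [h2] at hrc
  -- powers: nonzero entries of `M ^ k` raise the level by exactly `k`
  have hpow : ∀ k r c, (M ^ k) r c ≠ 0 → auxIdxLevel m p L c = auxIdxLevel m p L r + k := by
    intro k
    induction k with
    | zero =>
      intro r c h
      rw [pow_zero, Matrix.one_apply] at h
      by_cases hrc : r = c
      · subst hrc; simp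
      · simp [hrc] at h
    | succ k ih =>
      intro r c h
      rw [pow_succ, Matrix.mul_apply] at h
      obtain ⟨j, _, hj⟩ := Finset.exists_ne_zero_of_sum_ne_zero h
      have h1 : (M ^ k) r j ≠ 0 := fun h0 => hj (by rw [h0, zero_mul])
      have h2 : M j c ≠ 0 := fun h0 => hj (by rw [h0, mul_zero])
      rw [hkey j c h2, ih r j h1]
      ring
  -- hence `M ^ L = 0`
  have hML : M ^ L = 0 := by
    ext r c
    by_contra h
    have := hpow L r c h
    have hcL : auxIdxLevel m p L c < L := by
      cases c with
      | inl q => exact q.1.2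
      | inr c' => cases c' with
        | inl q => exact q.1.2
        | inr q => exact q.1.2
    omega
  exact schurStable_of_pow_eq_zero M L hML

end
end

section
/- Every nonzero complex eigenvalue of the auxiliary system matrix 𝐀 is an eigenvalue of the pL × pL companion-type block M := [[0_{p(L-1)×p}, I_{p(L-1)}], [Γ_Y1]], i.e., the spectrum of 𝐀 over ℂ is contained in {0} ∪ spectrum(M). -/
open Matrix
open scoped Kronecker

noncomputable section

/-- The `pL × pL` companion-type block `M = [[0_{p(L-1)×p}, I_{p(L-1)}], [Γ_Y1]]`. -/
def compM (p L : ℕ) (ΓY : Matrix (Fin p) (Fin L × Fin p) ℝ) :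
    Matrix (Fin L × Fin p) (Fin L × Fin p) ℝ :=
  Matrix.of fun q c =>
    if (q.1 : ℕ) = L - 1 then ΓY q.2 c
    else if (c.1 : ℕ) = (q.1 : ℕ) + 1 ∧ q.2 = c.2 then 1 else 0


private lemma sum_shift_aux {α : Type*} [Fintype α] [DecidableEq α] {L : ℕ}
    (f : Fin L × α → ℂ) (i : Fin L) (a : α) :
    (∑ q' : Fin L × α, (if ((q'.1 : ℕ) = (i : ℕ) + 1 ∧ a = q'.2) then (1:ℂ) else 0) * f q')
      = if h : (i : ℕ) + 1 < L then f (⟨(i : ℕ) + 1, h⟩, a) else 0 := by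
  split_ifs with h
  · rw [Finset.sum_eq_single ((⟨(i : ℕ) + 1, h⟩ : Fin L), a)]
    · simp
    · intro b _ hb
      rw [if_neg, zero_mul]
      rintro ⟨h1, h2⟩
      exact hb (Prod.ext (Fin.ext h1) h2.symm)
    · simp
  · apply Finset.sum_eq_zero
    intro b _
    rw [if_neg, zero_mul]
    rintro ⟨h1, -⟩
    exact h (h1 ▸ b.1.isLt)

/-- every nonzero complex eigenvalue of `𝐀` is an eigenvalue of the
companion-type block `M`, i.e. `spectrum ℂ 𝐀 ⊆ {0} ∪ spectrum ℂ M`. -/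
theorem auxA_spectrum_subset (m p L : ℕ) (hm : 1 ≤ m) (hp : 1 ≤ p) (hL : 1 ≤ L)
    (ΓU : Matrix (Fin p) (Fin L × Fin m) ℝ)
    (ΓY : Matrix (Fin p) (Fin L × Fin p) ℝ)
    (W : Matrix (Fin p) (Fin L × (Fin L × Fin p)) ℝ) :
    spectrum ℂ ((auxA m p L ΓU ΓY W).map (algebraMap ℝ ℂ))
      ⊆ {0} ∪ spectrum ℂ ((compM p L ΓY).map (algebraMap ℝ ℂ)) := by
  intro z hz
  by_cases hz0 : z = 0
  · exact Or.inl hz0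
  right
  set A' : Matrix (AuxIdx m p L) (AuxIdx m p L) ℂ :=
    (auxA m p L ΓU ΓY W).map (algebraMap ℝ ℂ) with hA'
  rw [spectrum.mem_iff] at hz
  have hdet : ((algebraMap ℂ (Matrix (AuxIdx m p L) (AuxIdx m p L) ℂ)) z - A').det = 0 := by
    by_contra h
    exact hz (((algebraMap ℂ _) z - A').isUnit_iff_isUnit_det.2 (isUnit_iff_ne_zero.2 h))
  obtain ⟨v, hv0, hv⟩ := (Matrix.exists_mulVec_eq_zero_iff).2 hdet
  have heig : ∀ i, A'.mulVec v i = z * v i := by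
    intro i
    have h1 := congrFun hv i
    rw [Pi.zero_apply, Matrix.sub_mulVec, Pi.sub_apply, sub_eq_zero] at h1
    rw [← h1, Matrix.algebraMap_eq_diagonal]
    simp [Matrix.mulVec_diagonal]
  set vu : Fin L × Fin m → ℂ := fun q => v (Sum.inl q) with hvu_def
  set vy : Fin L × Fin p → ℂ := fun q => v (Sum.inr (Sum.inl q)) with hvy_def
  set vr : Fin L × (Fin L × Fin p) → ℂ := fun q => v (Sum.inr (Sum.inr q)) with hvr_def
  -- the u-rows of the eigen equation
  have hu : ∀ q : Fin L × Fin m,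
      z * vu q = if h : (q.1 : ℕ) + 1 < L then vu (⟨(q.1 : ℕ) + 1, h⟩, q.2) else 0 := by
    intro q
    rw [← heig (Sum.inl q)]
    show ∑ j, A' (Sum.inl q) j * v j = _
    rw [Fintype.sum_sum_type]
    have h2 : ∑ j : (Fin L × Fin p) ⊕ (Fin L × (Fin L × Fin p)),
        A' (Sum.inl q) (Sum.inr j) * v (Sum.inr j) = 0 := by
      apply Finset.sum_eq_zero
      rintro (b | b) _ <;> simp [hA', auxA, Matrix.map_apply]
    rw [h2, add_zero]
    have h3 : ∀ q' : Fin L × Fin m, A' (Sum.inl q) (Sum.inl q')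
        = if ((q'.1 : ℕ) = (q.1 : ℕ) + 1 ∧ q.2 = q'.2) then (1:ℂ) else 0 := by
      intro q'
      simp only [hA', auxA, Matrix.map_apply, Matrix.of_apply]
      split_ifs <;> simp
    simp_rw [h3]
    exact sum_shift_aux (fun q' => v (Sum.inl q')) q.1 q.2
  -- the ρ-rows of the eigen equation
  have hr : ∀ q : Fin L × (Fin L × Fin p),
      z * vr q = if h : (q.1 : ℕ) + 1 < L then vr (⟨(q.1 : ℕ) + 1, h⟩, q.2) else 0 := by
    intro q
    rw [← heig (Sum.inr (Sum.inr q))]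
    show ∑ j, A' (Sum.inr (Sum.inr q)) j * v j = _
    rw [Fintype.sum_sum_type]
    have h2 : ∑ j : Fin L × Fin m,
        A' (Sum.inr (Sum.inr q)) (Sum.inl j) * v (Sum.inl j) = 0 := by
      apply Finset.sum_eq_zero
      intro b _
      simp [hA', auxA, Matrix.map_apply]
    rw [h2, zero_add, Fintype.sum_sum_type]
    have h2' : ∑ j : Fin L × Fin p,
        A' (Sum.inr (Sum.inr q)) (Sum.inr (Sum.inl j)) * v (Sum.inr (Sum.inl j)) = 0 := by
      apply Finset.sum_eq_zero
      intro b _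
      simp [hA', auxA, Matrix.map_apply]
    rw [h2', zero_add]
    have h3 : ∀ q' : Fin L × (Fin L × Fin p), A' (Sum.inr (Sum.inr q)) (Sum.inr (Sum.inr q'))
        = if ((q'.1 : ℕ) = (q.1 : ℕ) + 1 ∧ q.2 = q'.2) then (1:ℂ) else 0 := by
      intro q'
      simp only [hA', auxA, Matrix.map_apply, Matrix.of_apply]
      split_ifs <;> simp
    simp_rw [h3]
    exact sum_shift_aux (fun q' => v (Sum.inr (Sum.inr q'))) q.1 q.2
  -- the u-block of v vanishes
  have hvu0 : ∀ q, vu q = 0 := by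
    suffices hkey : ∀ j : ℕ, ∀ q : Fin L × Fin m, L - (q.1 : ℕ) ≤ j → vu q = 0 by
      intro q; exact hkey L q (Nat.sub_le _ _)
    intro j
    induction j with
    | zero => intro q hq; exact absurd hq (by have := q.1.isLt; omega)
    | succ j ih =>
      intro q hq
      have h1 := hu q
      split_ifs at h1 with h
      · rw [ih (⟨(q.1 : ℕ) + 1, h⟩, q.2) (by simp; omega)] at h1
        exact (mul_eq_zero.1 h1).resolve_left hz0
      · exact (mul_eq_zero.1 h1).resolve_left hz0
  -- the ρ-block of v vanishes
  have hvr0 : ∀ q, vr q = 0 := by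
    suffices hkey : ∀ j : ℕ, ∀ q : Fin L × (Fin L × Fin p), L - (q.1 : ℕ) ≤ j → vr q = 0 by
      intro q; exact hkey L q (Nat.sub_le _ _)
    intro j
    induction j with
    | zero => intro q hq; exact absurd hq (by have := q.1.isLt; omega)
    | succ j ih =>
      intro q hq
      have h1 := hr q
      split_ifs at h1 with h
      · rw [ih (⟨(q.1 : ℕ) + 1, h⟩, q.2) (by simp; omega)] at h1
        exact (mul_eq_zero.1 h1).resolve_left hz0
      · exact (mul_eq_zero.1 h1).resolve_left hz0
  -- vy is an eigenvector of M
  set M' : Matrix (Fin L × Fin p) (Fin L × Fin p) ℂ := (compM p L ΓY).map (algebraMap ℝ ℂ) with hM'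
  have hMvy : M'.mulVec vy = z • vy := by
    funext q
    have h1 : z * vy q = A'.mulVec v (Sum.inr (Sum.inl q)) := (heig _).symm
    have h2 : A'.mulVec v (Sum.inr (Sum.inl q)) = M'.mulVec vy q := by
      show ∑ j, A' (Sum.inr (Sum.inl q)) j * v j = ∑ j, M' q j * vy j
      rw [Fintype.sum_sum_type]
      have hl : ∑ j : Fin L × Fin m,
          A' (Sum.inr (Sum.inl q)) (Sum.inl j) * v (Sum.inl j) = 0 := by
        apply Finset.sum_eq_zero
        intro b _
        rw [show v (Sum.inl b) = vu b from rfl, hvu0, mul_zero]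
      rw [hl, zero_add, Fintype.sum_sum_type]
      have hrr : ∑ j : Fin L × (Fin L × Fin p),
          A' (Sum.inr (Sum.inl q)) (Sum.inr (Sum.inr j)) * v (Sum.inr (Sum.inr j)) = 0 := by
        apply Finset.sum_eq_zero
        intro b _
        rw [show v (Sum.inr (Sum.inr b)) = vr b from rfl, hvr0, mul_zero]
      rw [hrr, add_zero]
      apply Finset.sum_congr rfl
      intro b _
      congr 1
    rw [h2] at h1
    simpa using h1.symm
  have hvy0 : vy ≠ 0 := by
    intro hvy
    apply hv0
    funext i
    rcases i with q | q | q
    · exact hvu0 q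
    · exact congrFun hvy q
    · exact hvr0 q
  rw [spectrum.mem_iff]
  intro hunit
  rw [Matrix.isUnit_iff_isUnit_det, isUnit_iff_ne_zero] at hunit
  apply hunit
  rw [← Matrix.exists_mulVec_eq_zero_iff]
  refine ⟨vy, hvy0, ?_⟩
  rw [Matrix.sub_mulVec, hMvy, Matrix.algebraMap_eq_diagonal, sub_eq_zero]
  funext q
  simp [Matrix.mulVec_diagonal]


end
end
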